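/- arXiv:math/0407393 — 2 statements merged into one kernel-verified Lean document; each statement's English description precedes it below -/
import Mathlib

section
/- Let ν: Λ_{n-1} → Λ_n be the map σ ↦ Σ_{τ ↦ σ} τ. Then for every nonzero f ∈ Λ_{n-1}: μ(ν(f)) = μ(f) and λ(ν(f)) = p^n - p^{n-1} + λ(f). -/
open MonoidAlgebra Finset

/-- `G_n`: cyclic group of order `p^n`. -/
abbrev Gn (p n : ℕ) := Multiplicative (ZMod (p ^ n))

/-- `Λ_n = ℤ_p[G_n]`. -/
abbrev Lam (p : ℕ) [Fact p.Prime] (n : ℕ) := MonoidAlgebra ℤ_[p] (Gn p n)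

/-- `ξ_n`: sum of the elements of the subgroup of order `p`. -/
noncomputable def xi (p : ℕ) [Fact p.Prime] (n : ℕ) : Lam p n :=
  ∑ σ ∈ Finset.univ.filter (fun σ : Gn p n => σ ^ p = 1), MonoidAlgebra.of ℤ_[p] (Gn p n) σ

/-- The natural surjection `G_{n+1} →* G_n`. -/
noncomputable def projHom (p n : ℕ) : Gn p (n+1) →* Gn p n :=
  AddMonoidHom.toMultiplicative
    (ZMod.castHom (pow_dvd_pow p (Nat.le_succ n)) (ZMod (p^n))).toAddMonoidHom

/-- `π_{n+1/n} : Λ_{n+1} →+* Λ_n`, the induced projection of group algebras. -/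
noncomputable def piMap (p : ℕ) [Fact p.Prime] (n : ℕ) : Lam p (n+1) →+* Lam p n :=
  MonoidAlgebra.mapDomainRingHom ℤ_[p] (projHom p n)

/-- `ν_{n/n+1} : Λ_n → Λ_{n+1}`, sending `σ` to the sum of its preimages. -/
noncomputable def nuMap (p : ℕ) [Fact p.Prime] (n : ℕ) (f : Lam p n) : Lam p (n+1) :=
  ∑ τ : Gn p (n+1), MonoidAlgebra.single τ (f.coeff (projHom p n τ))

/-- Reduction mod `p`: `ℤ_p[G_n] → 𝔽_p[G_n]` (coefficientwise). -/
noncomputable def red (p : ℕ) [Fact p.Prime] (n : ℕ) (f : Lam p n) :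
    MonoidAlgebra (ZMod p) (Gn p n) :=
  MonoidAlgebra.ofCoeff (Finsupp.mapRange (PadicInt.toZMod) (map_zero _) f.coeff)

/-- The augmentation ideal `Ĩ_n` of `𝔽_p[G_n]`. -/
noncomputable def augIdeal (p : ℕ) [Fact p.Prime] (n : ℕ) :
    Ideal (MonoidAlgebra (ZMod p) (Gn p n)) :=
  RingHom.ker ((MonoidAlgebra.lift (ZMod p) (ZMod p) (Gn p n)) 1).toRingHom

/-!
Write `T = γ - 1` for a generator `γ` of `G_n`. Over `𝔽_p` we have `T^{p^n} = 0` and the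
augmentation ideal is `(T)`; since `T` is nilpotent, an element of nonzero augmentation is a unit,
so `λ(x) = k` exactly when `x = T^k v` with `v` a unit and `x ≠ 0`.

For `z ∈ Λ_{n+1}` one has `ν(π z) = ξ z`, where `ξ` is the sum of the elements of `ker π`, and
modulo `p`, `ξ = ∑_{k<p} (1 + T^{p^n})^k = T^{p^{n+1} - p^n}`. Lifting `x = T^l v` to `T^l z`
with `π z = v` gives `ν(x) = T^{p^{n+1} - p^n + l} z`, and `z` is again a unit. As for `μ`, `ν`
acts on coefficients, so it commutes with multiplication by `p^m` and reflects divisibility by it.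
-/

namespace MonoidAlgebra

variable {k G H : Type*} [Semiring k]

noncomputable def fiberSum [Fintype G] (φ : G → H) (f : k[H]) : k[G] :=
  ∑ τ : G, single τ (f.coeff (φ τ))

section
variable [Fintype G] (φ : G → H)

@[simp]
lemma coeff_fiberSum (f : k[H]) (τ : G) : (fiberSum φ f).coeff τ = f.coeff (φ τ) := by
  classical
  simp [fiberSum, coeff_sum, Finsupp.single_apply]

lemma fiberSum_add (f g : k[H]) : fiberSum φ (f + g) = fiberSum φ f + fiberSum φ g := by
  ext; simp [coeff_add]

lemma fiberSum_eq_zero_iff (hφ : Function.Surjective φ) {f : k[H]} :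
    fiberSum φ f = 0 ↔ f = 0 := by
  refine ⟨fun h => ?_, fun h => by ext; simp [h]⟩
  ext σ
  obtain ⟨τ, rfl⟩ := hφ σ
  simpa using congr_arg (fun x => x.coeff τ) h

end

section
variable [Monoid G] [Monoid H]

lemma coeff_natCast_mul (N : ℕ) (x : k[G]) (σ : G) :
    ((N : k[G]) * x).coeff σ = N * x.coeff σ := by
  rw [natCast_def, coeff_single_one_mul]

variable [Fintype G] (φ : G → H)

lemma fiberSum_natCast_mul (N : ℕ) (f : k[H]) :
    fiberSum φ ((N : k[H]) * f) = (N : k[G]) * fiberSum φ f := by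
  ext; simp [coeff_natCast_mul]

lemma natCast_dvd_of_natCast_dvd_fiberSum [Finite H] (hφ : Function.Surjective φ) (N : ℕ)
    {f : k[H]} (h : (N : k[G]) ∣ fiberSum φ f) : (N : k[H]) ∣ f := by
  obtain ⟨b, hb⟩ := h
  refine ⟨ofCoeff (Finsupp.equivFunOnFinite.symm fun σ => b.coeff (Function.surjInv hφ σ)), ?_⟩
  ext σ
  have := congr_arg (fun x => x.coeff (Function.surjInv hφ σ)) hb
  simp only [coeff_fiberSum, Function.surjInv_eq hφ, coeff_natCast_mul] at this
  simp [coeff_natCast_mul, this]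

end

lemma mapDomain_surjective {φ : G → H} (hφ : Function.Surjective φ) :
    Function.Surjective (mapDomain (R := k) φ) := fun a =>
  let ⟨x, hx⟩ := Finsupp.mapDomain_surjective hφ a.coeff
  ⟨ofCoeff x, by ext1; simp [hx]⟩

lemma fiberSum_mapDomain [Group G] [Group H] [Fintype G] (φ : G →* H) (w : k[G]) :
    fiberSum φ (mapDomain φ w) = fiberSum φ 1 * w := by
  classical
  induction w using MonoidAlgebra.induction_linear with
  | zero => ext; simp
  | add x y hx hy => rw [mapDomain_add, fiberSum_add, hx, hy, mul_add]
  | single σ c =>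
    ext τ
    simp [one_def, Finsupp.single_apply, eq_mul_inv_iff_mul_eq]

instance charP {k G : Type*} [CommRing k] [Monoid G] (p : ℕ) [CharP k p] : CharP k[G] p :=
  charP_of_injective_algebraMap' k p

end MonoidAlgebra

open Polynomial in
lemma geom_sum_one_add_eq_pow {R : Type*} [CommRing R] (p : ℕ) [Fact p.Prime]
    [Algebra (ZMod p) R] (u : R) : ∑ k ∈ range p, (1 + u) ^ k = u ^ (p - 1) := by
  have hX : ∑ k ∈ range p, (1 + X : (ZMod p)[X]) ^ k = X ^ (p - 1) := by
    refine mul_right_cancel₀ (X_ne_zero (R := ZMod p)) ?_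
    have h := geom_sum_mul (1 + X : (ZMod p)[X]) p
    rw [add_sub_cancel_left, add_pow_char, one_pow, add_sub_cancel_left] at h
    rw [h, ← pow_succ, Nat.sub_add_cancel (Fact.out : p.Prime).one_le]
  simpa using congr_arg (aeval u) hX

/-- `Λ_n / p = 𝔽_p[G_n]`. -/
abbrev LamBar (p n : ℕ) := MonoidAlgebra (ZMod p) (Gn p n)

namespace LamBar

variable (p m : ℕ)

noncomputable def gen : Gn p m := Multiplicative.ofAdd 1

noncomputable def T : LamBar p m := of (ZMod p) (Gn p m) (gen p m) - 1

noncomputable def aug : LamBar p m →+* ZMod p := (lift (ZMod p) (ZMod p) (Gn p m) 1).toRingHom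

lemma gen_pow (k : ℕ) : gen p m ^ k = Multiplicative.ofAdd (k : ZMod (p ^ m)) := by
  simp [gen, ← ofAdd_nsmul]

lemma gen_pow_val [Fact p.Prime] (σ : Gn p m) : gen p m ^ (Multiplicative.toAdd σ).val = σ := by
  rw [gen_pow, ZMod.natCast_zmod_val]
  rfl

lemma orderOf_gen : orderOf (gen p m) = p ^ m := by
  rw [gen, orderOf_ofAdd_eq_addOrderOf, ZMod.addOrderOf_one]

lemma gen_pow_card : gen p m ^ p ^ m = 1 := by
  simpa [orderOf_gen] using pow_orderOf_eq_one (gen p m)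

lemma T_pow_prime_pow [Fact p.Prime] (k : ℕ) :
    T p m ^ p ^ k = of (ZMod p) (Gn p m) (gen p m ^ p ^ k) - 1 := by
  rw [T, sub_pow_char_pow, one_pow, map_pow]

lemma T_pow_card [Fact p.Prime] : T p m ^ p ^ m = 0 := by
  rw [T_pow_prime_pow, gen_pow_card, map_one, sub_self]

lemma aug_T : aug p m (T p m) = 0 := by
  simp [T, aug]

lemma T_dvd_of_sub_one [Fact p.Prime] (σ : Gn p m) : T p m ∣ of (ZMod p) (Gn p m) σ - 1 := by
  rw [← gen_pow_val p m σ, map_pow, T]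
  simpa using sub_dvd_pow_sub_pow (of (ZMod p) (Gn p m) (gen p m)) 1 (Multiplicative.toAdd σ).val

lemma T_dvd_sub_algebraMap_aug [Fact p.Prime] (x : LamBar p m) :
    T p m ∣ x - algebraMap (ZMod p) (LamBar p m) (aug p m x) := by
  induction x using MonoidAlgebra.induction_linear with
  | zero => simp
  | add x y hx hy =>
    rw [map_add, map_add, add_sub_add_comm]
    exact dvd_add hx hy
  | single σ c =>
    have : single σ c - algebraMap (ZMod p) (LamBar p m) (aug p m (single σ c))
        = single 1 c * (of (ZMod p) (Gn p m) σ - 1) := by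
      simp [aug, mul_sub, of_apply, single_mul_single]
    rw [this]
    exact dvd_mul_of_dvd_right (T_dvd_of_sub_one p m σ) _

variable [Fact p.Prime]

lemma T_dvd_of_aug_eq_zero {x : LamBar p m} (hx : aug p m x = 0) : T p m ∣ x := by
  simpa [hx] using T_dvd_sub_algebraMap_aug p m x

lemma isUnit_of_aug_ne_zero {x : LamBar p m} (hx : aug p m x ≠ 0) : IsUnit x := by
  obtain ⟨y, hy⟩ := T_dvd_sub_algebraMap_aug p m x
  have hnil : IsNilpotent (x - algebraMap (ZMod p) (LamBar p m) (aug p m x)) :=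
    hy ▸ (Commute.all _ _).isNilpotent_mul_right ⟨_, T_pow_card p m⟩
  simpa using hnil.isUnit_add_left_of_commute
    (hx.isUnit.map (algebraMap (ZMod p) (LamBar p m))) (Commute.all _ _)

lemma augIdeal_eq_span : augIdeal p m = Ideal.span {T p m} :=
  le_antisymm (fun _ hx => Ideal.mem_span_singleton.2 (T_dvd_of_aug_eq_zero p m hx))
    ((Ideal.span_singleton_le_iff_mem _).2 (aug_T p m))

lemma mem_augIdeal_pow_iff (k : ℕ) (x : LamBar p m) :
    x ∈ augIdeal p m ^ k ↔ T p m ^ k ∣ x := by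
  rw [augIdeal_eq_span, Ideal.span_singleton_pow, Ideal.mem_span_singleton]

lemma mem_augIdeal_pow_and_not_mem_succ_iff (k : ℕ) (x : LamBar p m) :
    (x ∈ augIdeal p m ^ k ∧ x ∉ augIdeal p m ^ (k + 1)) ↔
      x ≠ 0 ∧ ∃ v, x = T p m ^ k * v ∧ aug p m v ≠ 0 := by
  simp only [mem_augIdeal_pow_iff]
  constructor
  · rintro ⟨⟨v, rfl⟩, hnot⟩
    refine ⟨fun h => hnot (h ▸ dvd_zero _), v, rfl, fun hv => hnot ?_⟩
    rw [pow_succ]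
    exact mul_dvd_mul_left _ (T_dvd_of_aug_eq_zero p m hv)
  · rintro ⟨hx, v, rfl, hv⟩
    refine ⟨dvd_mul_right _ _, fun ⟨b, hb⟩ => hx ?_⟩
    have hunit : IsUnit (v - T p m * b) := isUnit_of_aug_ne_zero p m (by simpa [aug_T] using hv)
    have hTk : T p m ^ k * (v - T p m * b) = 0 := by rw [mul_sub, hb]; ring
    rw [hunit.mul_left_eq_zero.1 hTk, zero_mul]

end LamBar

open LamBar

section Projection

variable (p n : ℕ)

lemma projHom_surjective : Function.Surjective (projHom p n) := fun σ =>
  let ⟨x, hx⟩ := ZMod.castHom_surjective (pow_dvd_pow p n.le_succ) (Multiplicative.toAdd σ)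
  ⟨Multiplicative.ofAdd x, congr_arg Multiplicative.ofAdd hx⟩

lemma projHom_gen : projHom p n (gen p (n + 1)) = gen p n :=
  congr_arg Multiplicative.ofAdd (map_one (ZMod.castHom (pow_dvd_pow p n.le_succ) (ZMod (p ^ n))))

variable [Fact p.Prime]

lemma nuMap_eq_fiberSum : nuMap p n = fiberSum (projHom p n) := rfl

lemma red_nuMap (f : Lam p n) :
    red p (n + 1) (nuMap p n f) = fiberSum (projHom p n) (red p n f) := by
  ext; simp [red, nuMap_eq_fiberSum]

lemma mapDomain_projHom_T : mapDomainRingHom (ZMod p) (projHom p n) (T p (n + 1)) = T p n := by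
  rw [T, T, map_sub, map_one, mapDomainRingHom_apply, of_apply, mapDomain_single, projHom_gen,
    of_apply]

lemma aug_mapDomain_projHom (x : LamBar p (n + 1)) :
    aug p n (mapDomain (projHom p n) x) = aug p (n + 1) x := by
  induction x using MonoidAlgebra.induction_linear with
  | zero => simp
  | add x y hx hy => rw [mapDomain_add, map_add, map_add, hx, hy]
  | single σ c => simp [aug]

lemma projHom_eq_one_iff (τ : Gn p (n + 1)) :
    projHom p n τ = 1 ↔ ∃ k < p, (gen p (n + 1) ^ p ^ n) ^ k = τ := by
  constructor
  · intro h
    rw [← gen_pow_val p (n + 1) τ, map_pow, projHom_gen, ← orderOf_dvd_iff_pow_eq_one,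
      orderOf_gen] at h
    obtain ⟨k, hk⟩ := h
    have hlt : p ^ n * k < p ^ n * p := by
      rw [← hk, ← pow_succ]
      exact ZMod.val_lt _
    refine ⟨k, Nat.lt_of_mul_lt_mul_left hlt, ?_⟩
    rw [← pow_mul, ← hk, gen_pow_val]
  · rintro ⟨k, -, rfl⟩
    rw [map_pow, map_pow, projHom_gen, gen_pow_card, one_pow]

lemma fiberSum_projHom_one :
    fiberSum (projHom p n) (1 : LamBar p n) = T p (n + 1) ^ (p ^ (n + 1) - p ^ n) := by
  classical
  have hp : p.Prime := Fact.out
  set s := gen p (n + 1) ^ p ^ n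
  have hs : orderOf s = p := by
    rw [orderOf_pow_of_dvd (pow_ne_zero _ hp.ne_zero)
      (by rw [orderOf_gen]; exact pow_dvd_pow p n.le_succ), orderOf_gen, pow_succ,
      Nat.mul_div_cancel_left _ (pow_pos hp.pos _)]
  have hker : univ.filter (fun τ => projHom p n τ = 1) = (range p).image (s ^ ·) := by
    ext τ
    simp [projHom_eq_one_iff, s]
  have hinj : Set.InjOn (s ^ ·) (range p : Set ℕ) := by
    have h := pow_injOn_Iio_orderOf (x := s)
    rwa [hs, ← coe_range] at h
  calc fiberSum (projHom p n) (1 : LamBar p n)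
      = ∑ τ ∈ univ.filter (fun τ => projHom p n τ = 1), of (ZMod p) _ τ := by
        rw [sum_filter]
        refine sum_congr rfl fun τ _ => ?_
        split_ifs with h <;> simp [one_def, h, of_apply]
    _ = ∑ k ∈ range p, (1 + T p (n + 1) ^ p ^ n) ^ k := by
        rw [hker, sum_image hinj]
        simp [T_pow_prime_pow, s]
    _ = (T p (n + 1) ^ p ^ n) ^ (p - 1) := geom_sum_one_add_eq_pow p _
    _ = T p (n + 1) ^ (p ^ (n + 1) - p ^ n) := by
        rw [← pow_mul]
        congr 1
        rw [Nat.mul_sub, mul_one, pow_succ]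

end Projection

theorem stmt11_general (p : ℕ) [Fact p.Prime] (n : ℕ) (f : Lam p n)
    (m l : ℕ)
    (hm : (p : Lam p n) ^ m ∣ f ∧ ¬ (p : Lam p n) ^ (m+1) ∣ f)
    (f' : Lam p n) (hf' : f = (p : Lam p n) ^ m * f')
    (hl : red p n f' ∈ (augIdeal p n) ^ l ∧ red p n f' ∉ (augIdeal p n) ^ (l+1)) :
    ((p : Lam p (n+1)) ^ m ∣ nuMap p n f ∧ ¬ (p : Lam p (n+1)) ^ (m+1) ∣ nuMap p n f) ∧
    (red p (n+1) (nuMap p n f') ∈ (augIdeal p (n+1)) ^ (p ^ (n+1) - p ^ n + l) ∧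
      red p (n+1) (nuMap p n f') ∉ (augIdeal p (n+1)) ^ (p ^ (n+1) - p ^ n + l + 1)) := by
  have hφ := projHom_surjective p n
  constructor
  · simp only [nuMap_eq_fiberSum, ← Nat.cast_pow] at hm hf' ⊢
    refine ⟨?_, fun h => hm.2 (natCast_dvd_of_natCast_dvd_fiberSum _ hφ _ h)⟩
    rw [hf', fiberSum_natCast_mul]
    exact dvd_mul_right _ _
  obtain ⟨hc, a, hca, ha⟩ := (mem_augIdeal_pow_and_not_mem_succ_iff p n l _).1 hl
  obtain ⟨z, rfl⟩ := MonoidAlgebra.mapDomain_surjective hφ a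
  rw [red_nuMap]
  refine (mem_augIdeal_pow_and_not_mem_succ_iff p (n + 1) _ _).2
    ⟨(fiberSum_eq_zero_iff _ hφ).not.2 hc, z, ?_, by rwa [aug_mapDomain_projHom] at ha⟩
  rw [hca, ← mapDomain_projHom_T, ← mapDomainRingHom_apply, ← map_pow, ← map_mul,
    mapDomainRingHom_apply, fiberSum_mapDomain, fiberSum_projHom_one, ← mul_assoc, ← pow_add]

/-- `μ(ν(f)) = μ(f)` and `λ(ν(f)) = p^{n+1} - p^n + λ(f)`. -/
theorem stmt11 (p : ℕ) [Fact p.Prime] (n : ℕ) (f : Lam p n) (hf : f ≠ 0)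
    (m l : ℕ)
    (hm : (p : Lam p n) ^ m ∣ f ∧ ¬ (p : Lam p n) ^ (m+1) ∣ f)
    (f' : Lam p n) (hf' : f = (p : Lam p n) ^ m * f')
    (hl : red p n f' ∈ (augIdeal p n) ^ l ∧ red p n f' ∉ (augIdeal p n) ^ (l+1)) :
    ((p : Lam p (n+1)) ^ m ∣ nuMap p n f ∧ ¬ (p : Lam p (n+1)) ^ (m+1) ∣ nuMap p n f) ∧
    (red p (n+1) (nuMap p n f') ∈ (augIdeal p (n+1)) ^ (p ^ (n+1) - p ^ n + l) ∧
      red p (n+1) (nuMap p n f') ∉ (augIdeal p (n+1)) ^ (p ^ (n+1) - p ^ n + l + 1)) :=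
  stmt11_general p n f m l hm f' hf' hl
end

section
/- Let p be a prime and n ≥ 1. Let f, g ∈ Λ_n = Z_p[G_n] with f·g ∈ ξ_n·Λ_n. If μ(f) = 0 and λ(f) < p^{n-1}, then g ∈ ξ_n·Λ_n. -/
open MonoidAlgebra Finset

/-!
Sending the generator `γ` of `G_{n+1}` to `X` identifies `Λ_{n+1} ⧸ (ξ)` with
`ℤ_p[X] ⧸ (Φ_{p^{n+1}})`, because `ξ` is the image of `Φ_{p^{n+1}} = ∑_{k<p} X^{k p^n}`.
Since `Φ_{p^{n+1}}(X + 1)` is Eisenstein at `p`, the ideal `(ξ)` is prime.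
Modulo `p`, `Φ_{p^{n+1}} = (X - 1)^{p^{n+1} - p^n}`, so every element of `(ξ)` reduces into
`Ĩ^{p^{n+1} - p^n} ⊆ Ĩ^{l+1}`; thus `f ∉ (ξ)`, and primality forces `g ∈ (ξ)`.
-/

open Polynomial

theorem Polynomial.cyclotomic_prime_pow_irreducible_of_prime {R : Type*} [CommRing R] [IsDomain R]
    {p : ℕ} [Fact p.Prime] (hp : Prime (p : R)) (n : ℕ) :
    Irreducible (cyclotomic (p ^ (n + 1)) R) := by
  -- The Eisenstein property of `Φ(X + 1)` is transported from `ℤ`.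
  set q := (cyclotomic (p ^ (n + 1)) R).comp (X + C 1) with hq
  have hq_monic : q.Monic := (cyclotomic.monic _ R).comp_X_add_C 1
  have hprime : (Ideal.span {(p : R)}).IsPrime := (Ideal.span_singleton_prime hp.ne_zero).mpr hp
  have hweak : q.IsWeaklyEisensteinAt (Ideal.span {(p : R)}) := by
    have h := (cyclotomic_prime_pow_comp_X_add_one_isEisensteinAt p n).isWeaklyEisensteinAt.map
      (Int.castRingHom R)
    simpa [Ideal.map_span, Polynomial.map_comp, hq] using h
  have hcoeff : q.coeff 0 = p := by
    simp [hq, coeff_zero_eq_eval_zero, eval_comp, eval_one_cyclotomic_prime_pow]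
  have hE : q.IsEisensteinAt (Ideal.span {(p : R)}) := by
    refine hq_monic.isEisensteinAt_of_mem_of_notMem hprime.ne_top hweak.mem ?_
    rw [hcoeff, Ideal.span_singleton_pow, Ideal.mem_span_singleton, sq]
    intro h
    exact hp.not_isUnit
      (isUnit_of_dvd_one ((mul_dvd_mul_iff_left hp.ne_zero).mp (by simpa using h)))
  have hq_irr : Irreducible q := by
    refine hE.irreducible hprime hq_monic.isPrimitive ?_
    rw [hq, natDegree_comp, natDegree_X_add_C, mul_one, natDegree_cyclotomic]
    exact Nat.totient_pos.mpr (pow_pos (Fact.out : p.Prime).pos _)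
  rw [hq, comp_eq_aeval, ← algEquivAevalXAddC_apply] at hq_irr
  exact (MulEquiv.irreducible_iff (algEquivAevalXAddC (1 : R))).mp hq_irr

theorem Polynomial.mk_X_pow_eq_one_of_dvd {R : Type*} [CommRing R] {Φ : R[X]} {N : ℕ}
    (hΦ : Φ ∣ X ^ N - 1) : Ideal.Quotient.mk (Ideal.span {Φ}) X ^ N = 1 := by
  rw [← map_pow, ← sub_eq_zero, ← map_one (Ideal.Quotient.mk _), ← map_sub,
    Ideal.Quotient.eq_zero_iff_mem, Ideal.mem_span_singleton]
  exact hΦ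

namespace ZMod

variable {N : ℕ}

theorem ofAdd_one_pow (k : ℕ) :
    Multiplicative.ofAdd (1 : ZMod N) ^ k = Multiplicative.ofAdd (k : ZMod N) := by
  rw [← ofAdd_nsmul, nsmul_one]

theorem ofAdd_one_pow_eq_one_iff (k : ℕ) :
    Multiplicative.ofAdd (1 : ZMod N) ^ k = 1 ↔ N ∣ k := by
  rw [ofAdd_one_pow, ← ofAdd_zero, EmbeddingLike.apply_eq_iff_eq, ZMod.natCast_eq_zero_iff]

variable [NeZero N]

theorem ofAdd_one_pow_val (σ : Multiplicative (ZMod N)) :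
    Multiplicative.ofAdd (1 : ZMod N) ^ (Multiplicative.toAdd σ).val = σ := by
  rw [ofAdd_one_pow, ZMod.natCast_zmod_val]
  rfl

noncomputable def powValHom {A : Type*} [Monoid A] (u : A) (hu : u ^ N = 1) :
    Multiplicative (ZMod N) →* A where
  toFun σ := u ^ (Multiplicative.toAdd σ).val
  map_one' := by simp
  map_mul' σ τ := by
    rw [toAdd_mul, ZMod.val_add, ← pow_eq_pow_mod _ hu, pow_add]

theorem filter_pow_eq_one_eq_image {m d : ℕ} (hN : N = m * d) :
    Finset.univ.filter (fun σ : Multiplicative (ZMod N) => σ ^ d = 1)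
      = (Finset.range d).image (fun k => Multiplicative.ofAdd (1 : ZMod N) ^ (m * k)) := by
  have hd : 0 < d := Nat.pos_of_ne_zero (by rintro rfl; exact NeZero.ne N (by simp [hN]))
  ext σ
  simp only [Finset.mem_filter, Finset.mem_univ, true_and, Finset.mem_image, Finset.mem_range]
  constructor
  · intro hσ
    rw [← ofAdd_one_pow_val σ, ← pow_mul, ofAdd_one_pow_eq_one_iff] at hσ
    obtain ⟨k, hk⟩ : m ∣ (Multiplicative.toAdd σ).val :=
      (Nat.mul_dvd_mul_iff_right hd).mp (by rwa [← hN])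
    refine ⟨k, ?_, by rw [← hk, ofAdd_one_pow_val]⟩
    have hval := (ZMod.val_lt (Multiplicative.toAdd σ)).trans_eq hN
    rw [hk] at hval
    exact Nat.lt_of_mul_lt_mul_left hval
  · rintro ⟨k, -, rfl⟩
    rw [← pow_mul, ofAdd_one_pow_eq_one_iff, hN, mul_right_comm]
    exact dvd_mul_right _ _

theorem injOn_ofAdd_one_pow_mul {m d : ℕ} (hN : N = m * d) :
    Set.InjOn (fun k => Multiplicative.ofAdd (1 : ZMod N) ^ (m * k)) (Set.Iio d) := by
  have hm : 0 < m := Nat.pos_of_ne_zero (by rintro rfl; exact NeZero.ne N (by simp [hN]))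
  intro a ha b hb hab
  simp only [ofAdd_one_pow, EmbeddingLike.apply_eq_iff_eq, ZMod.natCast_eq_natCast_iff'] at hab
  have hlt {k : ℕ} (hk : k < d) : m * k < N := hN ▸ Nat.mul_lt_mul_of_pos_left hk hm
  rw [Nat.mod_eq_of_lt (hlt ha), Nat.mod_eq_of_lt (hlt hb)] at hab
  exact Nat.eq_of_mul_eq_mul_left hm hab

end ZMod

namespace MonoidAlgebra

theorem mapRingHom_aeval_of {R S M : Type*} [CommSemiring R] [CommSemiring S] [Monoid M]
    (f : R →+* S) (g : M) (P : R[X]) :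
    mapRingHom M f (aeval (of R M g) P) = aeval (of S M g) (P.map f) := by
  rw [aeval_def, aeval_def, hom_eval₂, eval₂_map, mapRingHom_comp_algebraMap]
  simp [mapRingHom_single]

theorem aeval_C_mul_X_pow_of {R M : Type*} [CommSemiring R] [Monoid M] (g : M) (c : R) (k : ℕ) :
    aeval (of R M g) (C c * X ^ k) = single (g ^ k) c := by
  rw [map_mul, aeval_C, aeval_X_pow, ← map_pow, ← Algebra.smul_def, of_apply, smul_single',
    mul_one]

variable {R : Type*} [CommRing R] {N : ℕ} [NeZero N]

local notation "γ" => of R (Multiplicative (ZMod N)) (Multiplicative.ofAdd 1)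

theorem aeval_of_ofAdd_one_surjective : Function.Surjective (aeval (R := R) γ) := by
  intro a
  induction a using induction_linear with
  | zero => exact ⟨0, map_zero _⟩
  | add a b ha hb =>
    obtain ⟨P, rfl⟩ := ha
    obtain ⟨Q, rfl⟩ := hb
    exact ⟨P + Q, map_add _ P Q⟩
  | single σ c =>
    exact ⟨C c * X ^ (Multiplicative.toAdd σ).val,
      by rw [aeval_C_mul_X_pow_of, ZMod.ofAdd_one_pow_val]⟩

theorem sum_of_pow_eq_one_eq_aeval_geom_sum {m d : ℕ} (hN : N = m * d) :
    ∑ σ ∈ Finset.univ.filter (fun σ : Multiplicative (ZMod N) => σ ^ d = 1),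
        of R (Multiplicative (ZMod N)) σ
      = aeval γ (∑ k ∈ Finset.range d, ((X : R[X]) ^ m) ^ k) := by
  rw [ZMod.filter_pow_eq_one_eq_image hN,
    Finset.sum_image (by rw [Finset.coe_range]; exact ZMod.injOn_ofAdd_one_pow_mul hN), map_sum]
  simp only [← pow_mul, map_pow, aeval_X]

noncomputable def liftQuotientSpan (Φ : R[X]) (hΦ : Φ ∣ X ^ N - 1) :
    MonoidAlgebra R (Multiplicative (ZMod N)) →ₐ[R] R[X] ⧸ Ideal.span {Φ} :=
  lift R _ _ (ZMod.powValHom _ (mk_X_pow_eq_one_of_dvd hΦ))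

theorem liftQuotientSpan_aeval (Φ : R[X]) (hΦ : Φ ∣ X ^ N - 1) (P : R[X]) :
    liftQuotientSpan Φ hΦ (aeval γ P) = Ideal.Quotient.mk _ P := by
  have h : (liftQuotientSpan Φ hΦ).comp (aeval γ) = Ideal.Quotient.mkₐ R _ := by
    ext
    simp [liftQuotientSpan, ZMod.powValHom, ZMod.val_one_eq_one_mod,
      ← pow_eq_pow_mod _ (mk_X_pow_eq_one_of_dvd hΦ)]
  exact DFunLike.congr_fun h P

theorem ker_liftQuotientSpan (Φ : R[X]) (hΦ : Φ ∣ X ^ N - 1) :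
    RingHom.ker (liftQuotientSpan Φ hΦ) = Ideal.span {aeval γ Φ} := by
  apply le_antisymm
  · intro a ha
    obtain ⟨P, rfl⟩ := aeval_of_ofAdd_one_surjective a
    rw [RingHom.mem_ker, liftQuotientSpan_aeval, Ideal.Quotient.eq_zero_iff_mem,
      Ideal.mem_span_singleton] at ha
    obtain ⟨Q, rfl⟩ := ha
    rw [map_mul]
    exact Ideal.mul_mem_right _ _ (Ideal.mem_span_singleton_self _)
  · rw [Ideal.span_le, Set.singleton_subset_iff, SetLike.mem_coe, RingHom.mem_ker,
      liftQuotientSpan_aeval, Ideal.Quotient.eq_zero_iff_mem]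
    exact Ideal.mem_span_singleton_self _

theorem isPrime_span_aeval_of_dvd {Φ : R[X]} (hΦ : Φ ∣ X ^ N - 1)
    (hprime : (Ideal.span {Φ}).IsPrime) : (Ideal.span {aeval γ Φ}).IsPrime :=
  ker_liftQuotientSpan Φ hΦ ▸ RingHom.ker_isPrime _

end MonoidAlgebra

section IwasawaAlgebra

variable (p : ℕ) [Fact p.Prime] (n : ℕ)

theorem xi_eq_aeval_cyclotomic :
    xi p (n + 1) = aeval (MonoidAlgebra.of ℤ_[p] (Gn p (n + 1)) (Multiplicative.ofAdd 1))
      (cyclotomic (p ^ (n + 1)) ℤ_[p]) := by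
  rw [cyclotomic_prime_pow_eq_geom_sum Fact.out, xi,
    MonoidAlgebra.sum_of_pow_eq_one_eq_aeval_geom_sum (pow_succ p n)]

theorem isPrime_span_xi : (Ideal.span {xi p (n + 1)}).IsPrime := by
  have hΦ : Prime (cyclotomic (p ^ (n + 1)) ℤ_[p]) :=
    (cyclotomic_prime_pow_irreducible_of_prime PadicInt.prime_p n).prime
  rw [xi_eq_aeval_cyclotomic]
  exact MonoidAlgebra.isPrime_span_aeval_of_dvd (cyclotomic.dvd_X_pow_sub_one _ _)
    ((Ideal.span_singleton_prime hΦ.ne_zero).mpr hΦ)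

theorem red_eq_mapRingHom (f : Lam p n) :
    red p n f = MonoidAlgebra.mapRingHom _ PadicInt.toZMod f :=
  rfl

theorem of_sub_one_mem_augIdeal (σ : Gn p n) :
    MonoidAlgebra.of (ZMod p) (Gn p n) σ - 1 ∈ augIdeal p n := by
  simp [augIdeal, RingHom.mem_ker]

theorem red_xi_mem_augIdeal_pow :
    red p (n + 1) (xi p (n + 1)) ∈ augIdeal p (n + 1) ^ (p ^ (n + 1) - p ^ n) := by
  have hcyc : cyclotomic (p ^ (n + 1)) (ZMod p) = (X - 1) ^ (p ^ (n + 1) - p ^ n) := by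
    simpa using cyclotomic_mul_prime_pow_eq (ZMod p) (m := 1) (Fact.out : p.Prime).not_dvd_one
      n.succ_pos
  rw [red_eq_mapRingHom, xi_eq_aeval_cyclotomic, MonoidAlgebra.mapRingHom_aeval_of, map_cyclotomic,
    hcyc, map_pow, map_sub, aeval_X, map_one (aeval _)]
  exact Ideal.pow_mem_pow (of_sub_one_mem_augIdeal p (n + 1) _) _

theorem red_mem_augIdeal_pow_of_mem_span_xi {f : Lam p (n + 1)}
    (hf : f ∈ Ideal.span {xi p (n + 1)}) :
    red p (n + 1) f ∈ augIdeal p (n + 1) ^ (p ^ (n + 1) - p ^ n) := by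
  obtain ⟨h, rfl⟩ := Ideal.mem_span_singleton'.mp hf
  rw [red_eq_mapRingHom, map_mul, ← red_eq_mapRingHom]
  exact Ideal.mul_mem_left _ _ (red_xi_mem_augIdeal_pow p n)

end IwasawaAlgebra

theorem stmt12_general (p : ℕ) [Fact p.Prime] (n : ℕ) (f g : Lam p (n+1))
    (hfg : f * g ∈ Ideal.span {xi p (n+1)}) (l : ℕ)
    (hl : red p (n+1) f ∈ (augIdeal p (n+1)) ^ l ∧
      red p (n+1) f ∉ (augIdeal p (n+1)) ^ (l+1))
    (hlt : l < p ^ n) :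
    g ∈ Ideal.span {xi p (n+1)} := by
  refine ((isPrime_span_xi p n).mem_or_mem hfg).resolve_left fun hf => hl.2 ?_
  have hexp : l + 1 ≤ p ^ (n + 1) - p ^ n := by
    have : 2 * p ^ n ≤ p ^ (n + 1) := by
      rw [pow_succ']
      exact Nat.mul_le_mul_right _ (Fact.out : p.Prime).two_le
    omega
  exact Ideal.pow_le_pow_right hexp (red_mem_augIdeal_pow_of_mem_span_xi p n hf)

/-- If `f·g ∈ ξ·Λ`, `μ(f) = 0` and `λ(f) < p^{n-1}` (here at level `n+1`,
so the bound is `p^n`), then `g ∈ ξ·Λ`. -/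
theorem stmt12 (p : ℕ) [Fact p.Prime] (n : ℕ) (f g : Lam p (n+1))
    (hfg : f * g ∈ Ideal.span {xi p (n+1)})
    (hμ : ¬ (p : Lam p (n+1)) ∣ f) (l : ℕ)
    (hl : red p (n+1) f ∈ (augIdeal p (n+1)) ^ l ∧
      red p (n+1) f ∉ (augIdeal p (n+1)) ^ (l+1))
    (hlt : l < p ^ n) :
    g ∈ Ideal.span {xi p (n+1)} :=
  stmt12_general p n f g hfg l hl hlt
end
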